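/- arXiv:2501.16773 — 7 statements merged into one kernel-verified Lean document; each statement's English description precedes it below -/
import Mathlib

section
/- Let R be a Noetherian integral domain, I \subseteq R an ideal, t \geq 0 rational, and x \in R. Then x \in I_t (i.e., x^b \in \overline{I^a} where t = a/b) if and only if for every valuation v (possibly of higher rank or nondiscrete) of Frac(R) that is nonnegative on R, there exists y \in I with v(x) \geq t\, v(y). -/
/-- Integral closure of an ideal: elements satisfying an equation of integral dependence. -/
def idealIntClosure {R : Type} [CommRing R] (I : Ideal R) : Set R :=
  {x | ∃ n : ℕ, 0 < n ∧ ∃ c : ℕ → R, (∀ i, 1 ≤ i → i ≤ n → c i ∈ I ^ i) ∧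
    x ^ n + ∑ i ∈ Finset.Icc 1 n, c i * x ^ (n - i) = 0}

/-!
Write `X = x ^ b` and `J = I ^ a`. If `X` is integral over `J` and `v` is nonnegative on `R`, pick
`y ∈ I` of least value (`I` is finitely generated); the coefficients `c_i ∈ J ^ i` of the equation
then have value at least `a i v(y)`, and comparing the values of its terms forces
`v(X) ≥ a v(y)`. Conversely, if `X` is not integral over `J`, the ideal generated by `J / X` in
`R[J / X]` is proper: writing `1 = ∑_{k ≥ 1} c_k X⁻ᵏ` with `c_k ∈ J ^ k` and multiplying by `X ^ N`
would give an equation of integral dependence. A valuation ring dominating the localisation at a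
maximal ideal containing it satisfies `v(j) > v(X)` for all `j ∈ J`, in particular for `j = y ^ a`.
-/

open Polynomial

section IntegralClosure

variable {R : Type} [CommRing R]

theorem zero_mem_idealIntClosure (J : Ideal R) : (0 : R) ∈ idealIntClosure J :=
  ⟨1, one_pos, 0, fun _ _ _ ↦ zero_mem _, by simp⟩

variable {K : Type} [Field K] [Algebra R K]

theorem mem_idealIntClosure_of_aeval_inv_eq_one (hinj : Function.Injective (algebraMap R K))
    {J : Ideal R} {X : R} {p : R[X]} (hp : p ∈ reesAlgebra J) (hp0 : p.coeff 0 = 0)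
    (h : aeval (algebraMap R K X)⁻¹ p = 1) : X ∈ idealIntClosure J := by
  set N := p.natDegree
  have hX : algebraMap R K X ≠ 0 := by
    intro hX
    rw [hX, inv_zero, ← coeff_zero_eq_aeval_zero', hp0, map_zero] at h
    exact zero_ne_one h
  have hN : 0 < N := by
    refine Nat.pos_of_ne_zero fun hN ↦ ?_
    rw [eq_C_of_natDegree_eq_zero hN, hp0, map_zero, map_zero] at h
    exact zero_ne_one h
  have hsum : X ^ N = ∑ i ∈ Finset.Icc 1 N, p.coeff i * X ^ (N - i) := by
    apply hinj
    calc algebraMap R K (X ^ N) = algebraMap R K X ^ N * aeval (algebraMap R K X)⁻¹ p := by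
          rw [h, mul_one, map_pow]
      _ = _ := by
          rw [aeval_eq_sum_range, Finset.sum_range_eq_add_Ico _ N.add_one_pos, hp0, zero_smul,
            zero_add, Finset.Ico_add_one_right_eq_Icc, Finset.mul_sum, map_sum]
          refine Finset.sum_congr rfl fun i hi ↦ ?_
          rw [Algebra.smul_def, map_mul, map_pow, pow_sub₀ _ hX (Finset.mem_Icc.mp hi).2, inv_pow]
          ring
  refine ⟨N, hN, fun i ↦ -p.coeff i, fun i _ _ ↦ neg_mem (hp i), ?_⟩
  simp only [neg_mul, Finset.sum_neg_distrib, ← hsum, add_neg_cancel]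

theorem exists_valuationSubring_of_notMem_idealIntClosure
    (hinj : Function.Injective (algebraMap R K)) {J : Ideal R} {X : R}
    (hX : X ∉ idealIntClosure J) :
    ∃ B : ValuationSubring K, (∀ r, algebraMap R K r ∈ B) ∧
      ∀ j ∈ J, B.valuation (algebraMap R K j) < B.valuation (algebraMap R K X) := by
  set f := algebraMap R K with hf
  -- `A = R[J / X]`, the image of the Rees algebra `R[J t]` under `t ↦ 1 / X`
  set A : Subring K := ((reesAlgebra J).map (aeval (f X)⁻¹)).toSubring
  have hmonomial : ∀ j ∈ J,
      monomial 1 j ∈ reesAlgebra J ∧ aeval (f X)⁻¹ (monomial 1 j) = f j / f X := fun j hj ↦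
    ⟨reesAlgebra.monomial_mem.mpr (by rwa [pow_one]), by simp [hf, div_eq_mul_inv]⟩
  set 𝔞 : Ideal A := Ideal.span {a | ∃ j ∈ J, (a : K) = f j / f X}
  have h𝔞 : ∀ a ∈ 𝔞, ∃ p ∈ reesAlgebra J, p.coeff 0 = 0 ∧ aeval (f X)⁻¹ p = a := by
    intro a ha
    induction ha using Submodule.span_induction with
    | mem a ha =>
      obtain ⟨j, hj, ha⟩ := ha
      exact ⟨monomial 1 j, (hmonomial j hj).1, by simp, ha ▸ (hmonomial j hj).2⟩
    | zero => exact ⟨0, zero_mem _, by simp, by simp⟩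
    | add a b _ _ ha hb =>
      obtain ⟨p, hp, hp0, hpa⟩ := ha
      obtain ⟨q, hq, hq0, hqb⟩ := hb
      exact ⟨p + q, add_mem hp hq, by simp [hp0, hq0], by simp [hpa, hqb]⟩
    | smul b a _ ha =>
      obtain ⟨p, hp, hp0, hpa⟩ := ha
      obtain ⟨q, hq, hqb⟩ := Subalgebra.mem_map.mp b.2
      exact ⟨q * p, mul_mem hq hp, by simp [mul_coeff_zero, hp0], by simp [hpa, hqb]⟩
  have h𝔞_ne_top : 𝔞 ≠ ⊤ := by
    intro htop
    obtain ⟨p, hp, hp0, h1⟩ := h𝔞 1 (htop ▸ Submodule.mem_top)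
    exact hX (mem_idealIntClosure_of_aeval_inv_eq_one hinj hp hp0 h1)
  obtain ⟨B, hAB, hB⟩ := Ideal.image_subset_nonunits_valuationSubring 𝔞 h𝔞_ne_top
  refine ⟨B, fun r ↦ hAB (Subalgebra.algebraMap_mem _ r), fun j hj ↦ ?_⟩
  have hfX : f X ≠ 0 := by
    rw [map_ne_zero_iff _ hinj]
    rintro rfl
    exact hX (zero_mem_idealIntClosure J)
  have hjX : B.valuation (f j / f X) < 1 := by
    have hjA : f j / f X ∈ A := ⟨monomial 1 j, hmonomial j hj⟩
    exact B.mem_nonunits_iff.mp (hB ⟨⟨_, hjA⟩, Ideal.subset_span ⟨j, hj, rfl⟩, rfl⟩)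
  rwa [map_div₀, div_lt_one₀ ((Valuation.pos_iff _).mpr hfX)] at hjX

end IntegralClosure

theorem WithTop.nsmul_lt_nsmul_right {Γ : Type*} [AddCommMonoid Γ] [LinearOrder Γ]
    [IsOrderedCancelAddMonoid Γ] {n : ℕ} (hn : n ≠ 0) {α γ : WithTop Γ} (hα : α ≠ ⊤) (h : α < γ) :
    n • α < n • γ := by
  lift α to Γ using hα
  induction γ with
  | top =>
    obtain ⟨k, rfl⟩ := Nat.exists_eq_add_one_of_ne_zero hn
    rw [succ_nsmul ⊤, WithTop.add_top, ← WithTop.coe_nsmul]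
    exact WithTop.coe_lt_top _
  | coe γ =>
    rw [← WithTop.coe_nsmul, ← WithTop.coe_nsmul, WithTop.coe_lt_coe] at *
    exact _root_.nsmul_lt_nsmul_right hn h

namespace AddValuation

variable {R : Type} [CommRing R] {Γ : Type} [AddCommGroup Γ] [LinearOrder Γ]
  [IsOrderedAddMonoid Γ] (v : AddValuation R (WithTop Γ))

theorem exists_forall_le_of_fg (hv : ∀ r, 0 ≤ v r) {I : Ideal R} (hI : I.FG) :
    ∃ y ∈ I, ∀ z ∈ I, v y ≤ v z := by
  classical
  obtain ⟨S, rfl⟩ := hI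
  obtain ⟨y, hyS, hy⟩ := (insert 0 S).exists_min_image v ⟨0, Finset.mem_insert_self _ _⟩
  refine ⟨y, ?_, fun z hz ↦ ?_⟩
  · rcases Finset.mem_insert.mp hyS with rfl | hyS
    · exact zero_mem _
    · exact Ideal.subset_span hyS
  induction hz using Submodule.span_induction with
  | mem w hw => exact hy w (Finset.mem_insert_of_mem hw)
  | zero => simp
  | add w₁ w₂ _ _ h₁ h₂ => exact v.map_le_add h₁ h₂
  | smul r w _ hw =>
    rw [smul_eq_mul, v.map_mul]
    exact hw.trans (le_add_of_nonneg_left (hv r))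

theorem nsmul_le_of_mem_pow (hv : ∀ r, 0 ≤ v r) {I : Ideal R} {y : R}
    (hy : ∀ z ∈ I, v y ≤ v z) (n : ℕ) : ∀ z ∈ I ^ n, n • v y ≤ v z := by
  induction n with
  | zero => simpa using hv
  | succ n ih =>
    intro z hz
    rw [pow_succ] at hz
    refine Submodule.mul_induction_on hz (fun u hu w hw ↦ ?_)
      (fun w₁ w₂ h₁ h₂ ↦ v.map_le_add h₁ h₂)
    rw [v.map_mul, succ_nsmul]
    exact add_le_add (ih u hu) (hy w hw)

theorem le_of_mem_idealIntClosure {J : Ideal R} {γ : WithTop Γ}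
    (hγ : ∀ i, 0 < i → ∀ z ∈ J ^ i, i • γ ≤ v z) {X : R} (hX : X ∈ idealIntClosure J) :
    γ ≤ v X := by
  obtain ⟨n, hn, c, hc, heq⟩ := hX
  by_contra! hlt
  have hXtop : ∀ m : ℕ, m • v X ≠ ⊤ := by
    lift v X to Γ using hlt.ne_top with α
    exact fun m ↦ WithTop.coe_ne_top
  have : n • v X < v (X ^ n) := by
    rw [eq_neg_of_add_eq_zero_left heq, v.map_neg]
    refine v.map_lt_sum (hXtop n) fun i hi ↦ ?_
    obtain ⟨hi1, hin⟩ := Finset.mem_Icc.mp hi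
    rw [v.map_mul, v.map_pow]
    calc n • v X = i • v X + (n - i) • v X := by rw [← add_nsmul, Nat.add_sub_cancel' hin]
      _ < i • γ + (n - i) • v X := WithTop.add_lt_add_right (hXtop _)
          (WithTop.nsmul_lt_nsmul_right (by omega) hlt.ne_top hlt)
      _ ≤ v (c i) + (n - i) • v X := add_le_add_left (hγ i hi1 _ (hc i hi1 hin)) _
  exact this.ne (v.map_pow X n).symm

end AddValuation

section ToAddWithTop

variable {G₀ : Type} [LinearOrderedCommGroupWithZero G₀]

noncomputable def toAddWithTop (g : G₀) : WithTop (Additive G₀ˣ)ᵒᵈ :=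
  if hg : g = 0 then ⊤ else WithTop.some (OrderDual.toDual (Additive.ofMul (Units.mk0 g hg)))

@[simp] theorem toAddWithTop_zero : toAddWithTop (0 : G₀) = ⊤ := dif_pos rfl

theorem toAddWithTop_of_ne_zero {g : G₀} (hg : g ≠ 0) :
    toAddWithTop g = OrderDual.toDual (Additive.ofMul (Units.mk0 g hg)) := dif_neg hg

@[simp] theorem toAddWithTop_one : toAddWithTop (1 : G₀) = 0 := by
  rw [toAddWithTop_of_ne_zero one_ne_zero, Units.mk0_one]
  rfl

theorem toAddWithTop_mul (g h : G₀) : toAddWithTop (g * h) = toAddWithTop g + toAddWithTop h := by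
  rcases eq_or_ne g 0 with rfl | hg
  · simp
  rcases eq_or_ne h 0 with rfl | hh
  · simp
  rw [toAddWithTop_of_ne_zero hg, toAddWithTop_of_ne_zero hh,
    toAddWithTop_of_ne_zero (mul_ne_zero hg hh), ← WithTop.coe_add, Units.mk0_mul]
  rfl

theorem toAddWithTop_le_toAddWithTop {g h : G₀} : toAddWithTop g ≤ toAddWithTop h ↔ h ≤ g := by
  rcases eq_or_ne h 0 with rfl | hh
  · simp
  rcases eq_or_ne g 0 with rfl | hg
  · simp [toAddWithTop_of_ne_zero hh, hh]
  rw [toAddWithTop_of_ne_zero hg, toAddWithTop_of_ne_zero hh, WithTop.coe_le_coe]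
  simp [← Units.val_le_val]

theorem antitone_toAddWithTop : Antitone (toAddWithTop : G₀ → _) :=
  fun _ _ h ↦ toAddWithTop_le_toAddWithTop.mpr h

end ToAddWithTop

namespace Valuation

variable {R : Type} [CommRing R] {G₀ : Type} [LinearOrderedCommGroupWithZero G₀]

noncomputable def toAddValuationWithTop (v : Valuation R G₀) :
    AddValuation R (WithTop (Additive G₀ˣ)ᵒᵈ) :=
  AddValuation.of (fun r ↦ toAddWithTop (v r)) (by simp) (by simp)
    (fun x y ↦ by
      rw [← antitone_toAddWithTop.map_max]
      exact antitone_toAddWithTop (v.map_add x y))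
    (fun x y ↦ by simp only [map_mul, toAddWithTop_mul])

theorem toAddValuationWithTop_le_iff (v : Valuation R G₀) {r s : R} :
    v.toAddValuationWithTop r ≤ v.toAddValuationWithTop s ↔ v s ≤ v r :=
  toAddWithTop_le_toAddWithTop

end Valuation

theorem stmt2_general (R : Type) [CommRing R] [IsDomain R] [IsNoetherianRing R]
    (I : Ideal R) (a b : ℕ) (x : R) :
    x ^ b ∈ idealIntClosure (I ^ a) ↔
      ∀ (Γ : Type) [AddCommGroup Γ] [LinearOrder Γ] [IsOrderedAddMonoid Γ]
        (v : AddValuation (FractionRing R) (WithTop Γ)),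
        (∀ r : R, 0 ≤ v (algebraMap R (FractionRing R) r)) →
        ∃ y ∈ I, a • v (algebraMap R (FractionRing R) y)
          ≤ b • v (algebraMap R (FractionRing R) x) := by
  constructor
  · intro hX Γ _ _ _ v hv
    set w := v.comap (algebraMap R (FractionRing R))
    obtain ⟨y, hyI, hy⟩ := w.exists_forall_le_of_fg hv (IsNoetherian.noetherian I)
    have hpow : ∀ i, 0 < i → ∀ z ∈ (I ^ a) ^ i, i • a • w y ≤ w z := fun i _ z hz ↦ by
      rw [smul_smul, mul_comm]
      exact w.nsmul_le_of_mem_pow hv hy (a * i) z (by rwa [pow_mul])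
    have hxy := w.le_of_mem_idealIntClosure hpow hX
    rw [w.map_pow] at hxy
    exact ⟨y, hyI, hxy⟩
  · intro h
    by_contra hX
    obtain ⟨B, hRB, hB⟩ := exists_valuationSubring_of_notMem_idealIntClosure
      (IsFractionRing.injective R (FractionRing R)) hX
    set w := B.valuation.toAddValuationWithTop
    have hw : ∀ r : R, 0 ≤ w (algebraMap R (FractionRing R) r) := fun r ↦ by
      rw [← w.map_one, Valuation.toAddValuationWithTop_le_iff, map_one]
      exact B.valuation_le_one ⟨_, hRB r⟩
    obtain ⟨y, hyI, hy⟩ := h _ w hw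
    have hlt := hB (y ^ a) (Ideal.pow_mem_pow hyI a)
    rw [← not_le, ← Valuation.toAddValuationWithTop_le_iff, map_pow (algebraMap _ _),
      map_pow (algebraMap _ _), w.map_pow, w.map_pow] at hlt
    exact hlt hy

/-- `x ∈ I_t` (i.e. `x ^ b ∈ integral closure of I ^ a` where `t = a/b`) iff for every
valuation `v` of `Frac(R)` over `R`, with values in an arbitrary linearly ordered abelian
group, there exists `y ∈ I` with `v x ≥ t · v y` (i.e. `b • v x ≥ a • v y`). -/
theorem stmt2 (R : Type) [CommRing R] [IsDomain R] [IsNoetherianRing R]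
    (I : Ideal R) (a b : ℕ) (hb : b ≠ 0) (x : R) :
    x ^ b ∈ idealIntClosure (I ^ a) ↔
      ∀ (Γ : Type) [AddCommGroup Γ] [LinearOrder Γ] [IsOrderedAddMonoid Γ]
        (v : AddValuation (FractionRing R) (WithTop Γ)),
        (∀ r : R, 0 ≤ v (algebraMap R (FractionRing R) r)) →
        ∃ y ∈ I, a • v (algebraMap R (FractionRing R) y)
          ≤ b • v (algebraMap R (FractionRing R) x) :=
  stmt2_general R I a b x
end

section
/- Let R \subseteq S be a finite extension of Noetherian integral domains (with S contained in an absolute integral closure of R), and let I \subseteq R be an ideal and \alpha \geq 0 a rational number. Then (IS)_\alpha \cap R = I_\alpha, where (\cdot)_\alpha denotes the fractional integrally closed power. Consequently (IS)_{>\alpha} \cap R = I_{>\alpha}. -/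
/-- The fractional integrally closed power `I_q` for a rational `q ≥ 0`. -/
def fracPow {R : Type} [CommRing R] (I : Ideal R) (q : ℚ) : Set R :=
  {x | x ^ q.den ∈ idealIntClosure (I ^ q.num.toNat)}

/-!
If the image `y` of `x ∈ R` is integral over `JS`, put `K = JS + yS`: an equation of integral
dependence for `y` gives `y Kᵐ ⊆ JS · Kᵐ` for some `m`. Over the Noetherian ring `R`, the ideal
`Kᵐ` of the finite `R`-module `S` is a finitely generated `R`-module, faithful because `yᵐ ≠ 0` in
the domain `S`, and `x` maps it into `J Kᵐ`; the Cayley–Hamilton (determinant) trick then yields an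
equation of integral dependence for `x` over `J`. Fractional powers reduce to this since
`(IS)ᵃ = Iᵃ S`.
-/

open Polynomial

theorem map_mem_idealIntClosure_map {R S : Type} [CommRing R] [CommRing S] (f : R →+* S)
    {J : Ideal R} {x : R} (hx : x ∈ idealIntClosure J) :
    f x ∈ idealIntClosure (J.map f) := by
  obtain ⟨n, hn, c, hc, heq⟩ := hx
  refine ⟨n, hn, fun i => f (c i), fun i h1 h2 => ?_, ?_⟩
  · rw [← Ideal.map_pow]
    exact Ideal.mem_map_of_mem f (hc i h1 h2)
  · simpa using congrArg f heq

theorem mem_idealIntClosure_of_monic {R : Type} [CommRing R] [Nontrivial R] {J : Ideal R}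
    {x : R} {p : R[X]} (hp : p.Monic) (hcoeff : ∀ k, p.coeff k ∈ J ^ (p.natDegree - k))
    (hroot : p.eval x = 0) : x ∈ idealIntClosure J := by
  set d := p.natDegree
  have hd : 0 < d := Nat.pos_of_ne_zero fun h => by
    simp [hp.natDegree_eq_zero.mp h] at hroot
  refine ⟨d, hd, fun i => p.coeff (d - i), fun i _ hi => by
    simpa [Nat.sub_sub_self hi] using hcoeff (d - i), ?_⟩
  have hreflect : ∑ i ∈ Finset.Icc 1 d, p.coeff (d - i) * x ^ (d - i)
      = ∑ k ∈ Finset.range d, p.coeff k * x ^ k := by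
    rw [← Finset.Ico_add_one_right_eq_Icc,
      Finset.sum_Ico_reflect (fun k => p.coeff k * x ^ k) 1 le_rfl, Nat.sub_self,
      Nat.add_sub_cancel, Finset.range_eq_Ico]
  rw [hreflect, add_comm, ← hroot, eval_eq_sum_range, Finset.sum_range_succ,
    hp.coeff_natDegree, one_mul]

theorem mem_idealIntClosure_of_forall_smul_mem {R : Type} {M : Type*} [CommRing R]
    [Nontrivial R] [AddCommGroup M] [Module R M] [Module.Finite R M] [FaithfulSMul R M]
    {J : Ideal R} {x : R}
    (h : ∀ m : M, x • m ∈ J • (⊤ : Submodule R M)) : x ∈ idealIntClosure J := by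
  obtain ⟨p, hp, -, hcoeff, hroot⟩ :=
    LinearMap.exists_monic_and_natDegree_eq_and_coeff_mem_pow_and_aeval_eq_zero R
      (algebraMap R (Module.End R M) x) J (by rintro _ ⟨m, rfl⟩; exact h m)
  refine mem_idealIntClosure_of_monic hp hcoeff (eq_of_smul_eq_smul (α := M) fun m => ?_)
  rw [aeval_algebraMap_apply_eq_algebraMap_eval] at hroot
  simpa using LinearMap.congr_fun hroot m

theorem pow_succ_le_mul_pow_sup_span_pow {S : Type} [CommRing S] (J : Ideal S) (y : S) (m : ℕ) :
    (J ⊔ Ideal.span {y}) ^ (m + 1) ≤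
      J * (J ⊔ Ideal.span {y}) ^ m ⊔ Ideal.span {y ^ (m + 1)} := by
  set K := J ⊔ Ideal.span {y}
  induction m with
  | zero => simp [K]
  | succ m ih =>
    have hyK : Ideal.span {y ^ (m + 1)} ≤ K ^ (m + 1) := by
      rw [← Ideal.span_singleton_pow]
      exact Ideal.pow_right_mono le_sup_right _
    calc K ^ (m + 2) = K ^ (m + 1) * K := pow_succ _ _
      _ ≤ (J * K ^ m ⊔ Ideal.span {y ^ (m + 1)}) * K := Ideal.mul_mono_left ih
      _ = J * K ^ (m + 1) ⊔ (Ideal.span {y ^ (m + 1)} * J ⊔ Ideal.span {y ^ (m + 2)}) := by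
        rw [Ideal.sup_mul, mul_assoc, ← pow_succ, Ideal.mul_sup,
          Ideal.span_singleton_mul_span_singleton, ← pow_succ]
      _ ≤ J * K ^ (m + 1) ⊔ Ideal.span {y ^ (m + 2)} := by
        refine sup_le le_sup_left (sup_le_sup_right ?_ _)
        rw [mul_comm]
        exact Ideal.mul_mono_right hyK

theorem exists_span_singleton_mul_pow_le_of_mem_idealIntClosure {S : Type} [CommRing S]
    {J : Ideal S} {y : S} (hy : y ∈ idealIntClosure J) :
    ∃ m, Ideal.span {y} * (J ⊔ Ideal.span {y}) ^ m ≤ J * (J ⊔ Ideal.span {y}) ^ m := by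
  obtain ⟨n, hn, c, hc, heq⟩ := hy
  set K := J ⊔ Ideal.span {y}
  obtain ⟨m, rfl⟩ : ∃ m, n = m + 1 := ⟨n - 1, by omega⟩
  have hterm : ∀ i ∈ Finset.Icc 1 (m + 1), c i * y ^ (m + 1 - i) ∈ J * K ^ m := by
    intro i hi
    obtain ⟨hi1, him⟩ := Finset.mem_Icc.mp hi
    obtain ⟨j, rfl⟩ : ∃ j, i = j + 1 := ⟨i - 1, by omega⟩
    have hmem : c (j + 1) * y ^ (m - j) ∈ J * (J ^ j * Ideal.span {y} ^ (m - j)) := by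
      rw [← mul_assoc, ← pow_succ']
      exact Ideal.mul_mem_mul (hc _ hi1 him)
        (Ideal.pow_mem_pow (Ideal.mem_span_singleton_self y) _)
    refine Ideal.mul_mono_right ?_ (by simpa using hmem)
    calc J ^ j * Ideal.span {y} ^ (m - j) ≤ K ^ j * K ^ (m - j) :=
          Ideal.mul_mono (Ideal.pow_right_mono le_sup_left _) (Ideal.pow_right_mono le_sup_right _)
      _ = K ^ m := by rw [← pow_add]; congr 1; omega
  have hpow : y ^ (m + 1) ∈ J * K ^ m := by
    rw [eq_neg_of_add_eq_zero_left heq]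
    exact neg_mem (Submodule.sum_mem _ hterm)
  refine ⟨m, ?_⟩
  calc Ideal.span {y} * K ^ m ≤ K ^ (m + 1) := by
        rw [pow_succ']; exact Ideal.mul_mono_left le_sup_right
    _ ≤ J * K ^ m ⊔ Ideal.span {y ^ (m + 1)} := pow_succ_le_mul_pow_sup_span_pow J y m
    _ ≤ J * K ^ m := sup_le le_rfl ((Ideal.span_singleton_le_iff_mem _).mpr hpow)

theorem mem_idealIntClosure_of_algebraMap_mem {R S : Type} [CommRing R] [IsNoetherianRing R]
    [CommRing S] [IsDomain S] [Algebra R S] [Module.Finite R S]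
    (hinj : Function.Injective (algebraMap R S)) {J : Ideal R} {x : R}
    (hx : algebraMap R S x ∈ idealIntClosure (J.map (algebraMap R S))) :
    x ∈ idealIntClosure J := by
  by_cases hx0 : x = 0
  · exact ⟨1, one_pos, 0, by simp, by simp [hx0]⟩
  have : Nontrivial R := (algebraMap R S).domain_nontrivial
  set y := algebraMap R S x
  set J' := J.map (algebraMap R S)
  obtain ⟨m, hm⟩ := exists_span_singleton_mul_pow_le_of_mem_idealIntClosure hx
  set N := ((J' ⊔ Ideal.span {y}) ^ m : Ideal S).restrictScalars R
  have hyN : y ^ m ∈ N :=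
    Ideal.pow_mem_pow (Ideal.mem_sup_right (Ideal.mem_span_singleton_self y)) m
  have : IsNoetherian R S := isNoetherian_of_isNoetherianRing_of_finite R S
  have : FaithfulSMul R N := ⟨fun h => hinj <| mul_right_cancel₀
    (pow_ne_zero m ((map_ne_zero_iff _ hinj).mpr hx0))
    (by simpa [Algebra.smul_def] using congrArg Subtype.val (h ⟨y ^ m, hyN⟩))⟩
  refine mem_idealIntClosure_of_forall_smul_mem (M := N) fun n => ?_
  rw [Submodule.mem_smul_top_iff, ← Ideal.smul_restrictScalars, Submodule.restrictScalars_mem,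
    Ideal.smul_eq_mul, Submodule.coe_smul, Algebra.smul_def]
  exact hm (Ideal.mul_mem_mul (Ideal.mem_span_singleton_self y) n.2)

theorem algebraMap_mem_fracPow_map_iff {R S : Type} [CommRing R] [IsNoetherianRing R]
    [CommRing S] [IsDomain S] [Algebra R S] [Module.Finite R S]
    (hinj : Function.Injective (algebraMap R S)) (I : Ideal R) (q : ℚ) (x : R) :
    algebraMap R S x ∈ fracPow (I.map (algebraMap R S)) q ↔ x ∈ fracPow I q := by
  rw [fracPow, fracPow, Set.mem_ofPred_eq, Set.mem_ofPred_eq, ← map_pow, ← Ideal.map_pow]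
  exact ⟨mem_idealIntClosure_of_algebraMap_mem hinj, map_mem_idealIntClosure_map _⟩

theorem stmt4_general (R S : Type) [CommRing R] [IsNoetherianRing R]
    [CommRing S] [IsDomain S] [Algebra R S]
    (hinj : Function.Injective (algebraMap R S)) [Module.Finite R S]
    (I : Ideal R) (α : ℚ) :
    (∀ x : R, algebraMap R S x ∈ fracPow (I.map (algebraMap R S)) α ↔ x ∈ fracPow I α) ∧
    (∀ x : R,
      (∃ ε : ℚ, 0 < ε ∧ algebraMap R S x ∈ fracPow (I.map (algebraMap R S)) (α + ε)) ↔
      (∃ ε : ℚ, 0 < ε ∧ x ∈ fracPow I (α + ε))) :=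
  ⟨algebraMap_mem_fracPow_map_iff hinj I α, fun x => exists_congr fun ε =>
    and_congr_right fun _ => algebraMap_mem_fracPow_map_iff hinj I (α + ε) x⟩

/-- For a finite extension `R ⊆ S` of Noetherian domains: `(IS)_α ∩ R = I_α`, and
consequently `(IS)_{>α} ∩ R = I_{>α}` (strict powers expressed as unions over `ε > 0`). -/
theorem stmt4 (R S : Type) [CommRing R] [IsDomain R] [IsNoetherianRing R]
    [CommRing S] [IsDomain S] [IsNoetherianRing S] [Algebra R S]
    (hinj : Function.Injective (algebraMap R S)) [Module.Finite R S]
    (I : Ideal R) (α : ℚ) (hα : 0 ≤ α) :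
    (∀ x : R, algebraMap R S x ∈ fracPow (I.map (algebraMap R S)) α ↔ x ∈ fracPow I α) ∧
    (∀ x : R,
      (∃ ε : ℚ, 0 < ε ∧ algebraMap R S x ∈ fracPow (I.map (algebraMap R S)) (α + ε)) ↔
      (∃ ε : ℚ, 0 < ε ∧ x ∈ fracPow I (α + ε))) :=
  stmt4_general R S hinj I α
end

section
/- Let R be a Noetherian domain with absolute integral closure R^+ inside an algebraic closure of Frac(R). For any ideal \mathfrak{a} = (f_1, ..., f_n) \subseteq R and any real t > 0, the fractional power (\mathfrak{a} R^+)_t (defined valuatively in the non-Noetherian ring R^+) equals the union of (\mathfrak{a} S)_t over all finite extensions R \subseteq S \subseteq R^+. The analogous statement holds with t replaced by the strict condition > t. -/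
set_option synthInstance.maxHeartbeats 1000000
open scoped NNReal

/-- A fixed algebraic closure of the fraction field of `R`. -/
abbrev Kbar (R : Type) [CommRing R] [IsDomain R] : Type :=
  AlgebraicClosure (FractionRing R)

/-- The absolute integral closure `R⁺` of `R`. -/
noncomputable def Rplus (R : Type) [CommRing R] [IsDomain R] : Subalgebra R (Kbar R) :=
  integralClosure R (Kbar R)

/-- The extension of the ideal `I ⊆ R` to the subalgebra `A` of `Kbar R`, as a set. -/
def extIdeal (R : Type) [CommRing R] [IsDomain R] (A : Subalgebra R (Kbar R))
    (I : Ideal R) : Set (Kbar R) :=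
  (Submodule.span (↥A) ((algebraMap R (Kbar R)) '' (I : Set R)) : Set (Kbar R))

/-- The valuatively defined fractional power `J_t` (relative to the subalgebra `A`):
elements `x` of `A` such that for every (rank-one, real-valued, multiplicatively written)
valuation `v` of `Kbar R` nonnegative on `A` (i.e. `v ≤ 1` on `A`), there is `y ∈ J` with
`v x ≤ (v y) ^ t` (additively: `v_add x ≥ t · v_add y`). -/
def valFracGE (R : Type) [CommRing R] [IsDomain R] (A : Subalgebra R (Kbar R))
    (J : Set (Kbar R)) (t : ℝ) : Set (Kbar R) :=
  {x | x ∈ A ∧ ∀ v : Valuation (Kbar R) ℝ≥0,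
    (∀ a ∈ (A : Set (Kbar R)), v a ≤ 1) → ∃ y ∈ J, v x ≤ (v y) ^ t}

/-- The strict valuatively defined fractional power `J_{>t}`. -/
def valFracGT (R : Type) [CommRing R] [IsDomain R] (A : Subalgebra R (Kbar R))
    (J : Set (Kbar R)) (t : ℝ) : Set (Kbar R) :=
  {x | x ∈ A ∧ ∀ v : Valuation (Kbar R) ℝ≥0,
    (∀ a ∈ (A : Set (Kbar R)), v a ≤ 1) → ∃ y ∈ J, v x < (v y) ^ t}


open Polynomial in
theorem aux_val_le_one_of_integral {R : Type} [CommRing R] [IsDomain R]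
    (v : Valuation (Kbar R) ℝ≥0)
    (hv : ∀ r : R, v (algebraMap R (Kbar R) r) ≤ 1)
    {x : Kbar R} (hx : IsIntegral R x) : v x ≤ 1 := by
  obtain ⟨p, hpm, hpx⟩ := hx
  refine le_of_not_gt fun hvx => ?_
  rw [hpm.as_sum, eval₂_add, eval₂_pow, eval₂_X, eval₂_finset_sum, add_eq_zero_iff_eq_neg] at hpx
  replace hpx := congr_arg v hpx
  refine ne_of_gt ?_ hpx
  rw [v.map_neg, v.map_pow]
  refine v.map_sum_lt' (zero_lt_one.trans_le (one_le_pow_of_one_le' hvx.le _)) fun i hi => ?_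
  rw [eval₂_mul, eval₂_pow, eval₂_C, eval₂_X, v.map_mul, v.map_pow, ← one_mul (v x ^ p.natDegree)]
  cases' (hv <| p.coeff i).lt_or_eq with hvpi hvpi
  · exact mul_lt_mul'' hvpi (pow_lt_pow_right₀ hvx <| Finset.mem_range.1 hi) zero_le' zero_le'
  · rw [hvpi, one_mul, one_mul]; exact pow_lt_pow_right₀ hvx (Finset.mem_range.1 hi)

theorem aux_extIdeal_mono {R : Type} [CommRing R] [IsDomain R] (𝔞 : Ideal R)
    {S A : Subalgebra R (Kbar R)} (h : S ≤ A) :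
    extIdeal R S 𝔞 ⊆ extIdeal R A 𝔞 := by
  intro y hy
  simp only [extIdeal, SetLike.mem_coe] at hy ⊢
  induction hy using Submodule.span_induction with
  | mem z hz => exact Submodule.subset_span hz
  | zero => exact zero_mem _
  | add a b _ _ ha hb => exact add_mem ha hb
  | smul s a _ ha => exact Submodule.smul_mem _ (⟨(s : Kbar R), h s.2⟩ : ↥A) ha

theorem aux_span_reduce {R : Type} [CommRing R] [IsDomain R] (𝔞 : Ideal R)
    (S : Subalgebra R (Kbar R)) (v : Valuation (Kbar R) ℝ≥0)
    (hv : ∀ b ∈ (Rplus R : Set (Kbar R)), v b ≤ 1)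
    {y : Kbar R} (hy : y ∈ extIdeal R (Rplus R) 𝔞) :
    ∃ y' ∈ extIdeal R S 𝔞, v y ≤ v y' := by
  simp only [extIdeal, SetLike.mem_coe] at hy ⊢
  induction hy using Submodule.span_induction with
  | mem z hz => exact ⟨z, Submodule.subset_span hz, le_rfl⟩
  | zero => exact ⟨0, zero_mem _, le_rfl⟩
  | add a b _ _ ha hb =>
      obtain ⟨y1, hy1, le1⟩ := ha
      obtain ⟨y2, hy2, le2⟩ := hb
      rcases le_total (v a) (v b) with hab | hab
      · exact ⟨y2, hy2, (v.map_add a b).trans ((max_le (hab.trans le2) le2))⟩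
      · exact ⟨y1, hy1, (v.map_add a b).trans ((max_le le1 (hab.trans le1)))⟩
  | smul s a _ ha =>
      obtain ⟨y1, hy1, le1⟩ := ha
      refine ⟨y1, hy1, ?_⟩
      have : (s : Kbar R) • a = (s : Kbar R) * a := rfl
      calc v ((s : Kbar R) * a) = v (s : Kbar R) * v a := v.map_mul _ _
        _ ≤ 1 * v a := mul_le_mul_left (hv _ s.2) _
        _ ≤ v y1 := by rw [one_mul]; exact le1

theorem aux_val_one_on_Rplus {R : Type} [CommRing R] [IsDomain R]
    {S : Subalgebra R (Kbar R)} (v : Valuation (Kbar R) ℝ≥0)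
    (hv : ∀ a ∈ (S : Set (Kbar R)), v a ≤ 1) :
    ∀ b ∈ ((Rplus R : Subalgebra R (Kbar R)) : Set (Kbar R)), v b ≤ 1 := fun b hb =>
  aux_val_le_one_of_integral v (fun r => hv _ (S.algebraMap_mem r)) hb

/-- The fractional power `(𝔞 R⁺)_t` is the union of `(𝔞 S)_t` over all finite
extensions `R ⊆ S ⊆ R⁺`, and likewise for the strict versions. -/
theorem stmt5 (R : Type) [CommRing R] [IsDomain R] [IsNoetherianRing R]
    (𝔞 : Ideal R) (t : ℝ) (ht : 0 < t) :
    (valFracGE R (Rplus R) (extIdeal R (Rplus R) 𝔞) t =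
      {x | ∃ S : Subalgebra R (Kbar R), S ≤ Rplus R ∧ Module.Finite R ↥S ∧
        x ∈ valFracGE R S (extIdeal R S 𝔞) t}) ∧
    (valFracGT R (Rplus R) (extIdeal R (Rplus R) 𝔞) t =
      {x | ∃ S : Subalgebra R (Kbar R), S ≤ Rplus R ∧ Module.Finite R ↥S ∧
        x ∈ valFracGT R S (extIdeal R S 𝔞) t}) := by
  constructor
  · ext x
    constructor
    · rintro ⟨hxA, hxv⟩
      have hxint : IsIntegral R x := hxA
      refine ⟨Algebra.adjoin R {x}, Algebra.adjoin_le (Set.singleton_subset_iff.2 hxA),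
        Module.Finite.iff_fg.mpr hxint.fg_adjoin_singleton,
        Algebra.self_mem_adjoin_singleton R x, fun v hv => ?_⟩
      obtain ⟨y, hy, hxy⟩ := hxv v (aux_val_one_on_Rplus v hv)
      obtain ⟨y', hy', hyy'⟩ := aux_span_reduce 𝔞 (Algebra.adjoin R {x}) v
        (aux_val_one_on_Rplus v hv) hy
      exact ⟨y', hy', hxy.trans (NNReal.rpow_le_rpow hyy' ht.le)⟩
    · rintro ⟨S, hSle, _, hxS, hxv⟩
      refine ⟨hSle hxS, fun v hv => ?_⟩
      obtain ⟨y, hy, hxy⟩ := hxv v (fun a ha => hv a (hSle ha))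
      exact ⟨y, aux_extIdeal_mono 𝔞 hSle hy, hxy⟩
  · ext x
    constructor
    · rintro ⟨hxA, hxv⟩
      have hxint : IsIntegral R x := hxA
      refine ⟨Algebra.adjoin R {x}, Algebra.adjoin_le (Set.singleton_subset_iff.2 hxA),
        Module.Finite.iff_fg.mpr hxint.fg_adjoin_singleton,
        Algebra.self_mem_adjoin_singleton R x, fun v hv => ?_⟩
      obtain ⟨y, hy, hxy⟩ := hxv v (aux_val_one_on_Rplus v hv)
      obtain ⟨y', hy', hyy'⟩ := aux_span_reduce 𝔞 (Algebra.adjoin R {x}) v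
        (aux_val_one_on_Rplus v hv) hy
      exact ⟨y', hy', hxy.trans_le (NNReal.rpow_le_rpow hyy' ht.le)⟩
    · rintro ⟨S, hSle, _, hxS, hxv⟩
      refine ⟨hSle hxS, fun v hv => ?_⟩
      obtain ⟨y, hy, hxy⟩ := hxv v (fun a ha => hv a (hSle ha))
      exact ⟨y, aux_extIdeal_mono 𝔞 hSle hy, hxy⟩
end

section
/- Let R be a Noetherian domain with absolute integral closure R^+ and \mathfrak{a} \subseteq R an ideal. For any reals s, t > 0, the product (\mathfrak{a} R^+)_s \cdot (\mathfrak{a} R^+)_t is contained in (\mathfrak{a} R^+)_{s+t}. -/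
open scoped NNReal

/-- The product `(𝔞 R⁺)_s · (𝔞 R⁺)_t` is contained in `(𝔞 R⁺)_{s+t}`. -/
theorem stmt7 (R : Type) [CommRing R] [IsDomain R] [IsNoetherianRing R]
    (𝔞 : Ideal R) (s t : ℝ) (hs : 0 < s) (ht : 0 < t) :
    ∀ x ∈ valFracGE R (Rplus R) (extIdeal R (Rplus R) 𝔞) s,
      ∀ y ∈ valFracGE R (Rplus R) (extIdeal R (Rplus R) 𝔞) t,
        x * y ∈ valFracGE R (Rplus R) (extIdeal R (Rplus R) 𝔞) (s + t) := by
  rintro x ⟨hxA, hx⟩ y ⟨hyA, hy⟩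
  refine ⟨mul_mem hxA hyA, fun v hv => ?_⟩
  obtain ⟨y1, hy1J, hy1⟩ := hx v hv
  obtain ⟨y2, hy2J, hy2⟩ := hy v hv
  have hst : s + t ≠ 0 := by positivity
  rcases le_total (v y1) (v y2) with h | h
  · refine ⟨y2, hy2J, ?_⟩
    rw [map_mul, NNReal.rpow_add' hst]
    exact mul_le_mul' (hy1.trans (NNReal.rpow_le_rpow h hs.le)) hy2
  · refine ⟨y1, hy1J, ?_⟩
    rw [map_mul, NNReal.rpow_add' hst]
    exact mul_le_mul' hy1 (hy2.trans (NNReal.rpow_le_rpow h ht.le))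
end

section
/- Let R be a Noetherian domain of prime characteristic p with ideals \mathfrak{a}, J such that \mathfrak{a} \subseteq \sqrt{J}. Then the F-threshold up to Frobenius closure satisfies \tilde{c}^J(\mathfrak{a}) = sup\{ n/p^e : (\mathfrak{a}^n)^{1/p^e} \not\subseteq J R_{perf} \}, where R_{perf} = \bigcup_e R^{1/p^e} is the perfection of R. -/
/-- The Frobenius (bracket) power `I^{[q]}` of an ideal. -/
def frobPow {R : Type} [CommRing R] (I : Ideal R) (q : ℕ) : Ideal R :=
  Ideal.span ((· ^ q) '' (I : Set R))

/-- The Frobenius closure of an ideal in a ring of characteristic `p`. -/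
def frobClosure {R : Type} [CommRing R] (p : ℕ) (I : Ideal R) : Set R :=
  {x | ∃ e : ℕ, x ^ p ^ e ∈ frobPow I (p ^ e)}

/-- The tight closure of an ideal in a domain of characteristic `p`. -/
def tightClosure {R : Type} [CommRing R] (p : ℕ) (I : Ideal R) : Set R :=
  {x | ∃ c : R, c ≠ 0 ∧ ∀ e : ℕ, c * x ^ p ^ e ∈ frobPow I (p ^ e)}

section helpers
variable {p : ℕ} [Fact p.Prime] {R : Type} [CommRing R]

lemma mem_frobPow_of_mem {I : Ideal R} {x : R} (hx : x ∈ I) (q : ℕ) : x ^ q ∈ frobPow I q :=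
  Ideal.subset_span ⟨x, hx, rfl⟩

lemma frobPow_le (I : Ideal R) {q : ℕ} (hq : 0 < q) : frobPow I q ≤ I := by
  rw [frobPow, Ideal.span_le]
  rintro _ ⟨x, hx, rfl⟩
  exact Ideal.pow_mem_of_mem I hx q hq

lemma frobPow_mem_pow [CharP R p] {I : Ideal R} {x : R} {a : ℕ} (n : ℕ)
    (hx : x ∈ frobPow I (p ^ a)) : x ^ p ^ n ∈ frobPow I (p ^ (a + n)) := by
  have h : (frobPow I (p ^ a)).map (iterateFrobenius R p n) ≤ frobPow I (p ^ (a + n)) := by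
    rw [frobPow, Ideal.map_span, Ideal.span_le]
    rintro _ ⟨_, ⟨y, hy, rfl⟩, rfl⟩
    exact Ideal.subset_span ⟨y, hy, by rw [iterateFrobenius_def, ← pow_mul, ← pow_add]⟩
  have := h (Ideal.mem_map_of_mem _ hx)
  rwa [iterateFrobenius_def] at this

lemma frobPow_frobPow_le [CharP R p] (I : Ideal R) (a b : ℕ) :
    frobPow (frobPow I (p ^ a)) (p ^ b) ≤ frobPow I (p ^ (a + b)) := by
  rw [frobPow, Ideal.span_le]
  rintro _ ⟨y, hy, rfl⟩
  exact frobPow_mem_pow b hy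

lemma frobPow_mul_le (I : Ideal R) (a b : ℕ) :
    frobPow I (a * b) ≤ frobPow (frobPow I a) b := by
  rw [frobPow, Ideal.span_le]
  rintro _ ⟨y, hy, rfl⟩
  simp only [SetLike.mem_coe]
  rw [pow_mul]
  exact mem_frobPow_of_mem (mem_frobPow_of_mem hy a) b

lemma frobClosure_frobPow_iff [CharP R p] {I : Ideal R} {x : R} {e : ℕ} :
    x ∈ frobClosure p (frobPow I (p ^ e)) ↔ ∃ k, x ^ p ^ k ∈ frobPow I (p ^ (e + k)) := by
  constructor
  · rintro ⟨k, hk⟩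
    exact ⟨k, frobPow_frobPow_le I e k hk⟩
  · rintro ⟨k, hk⟩
    refine ⟨k, frobPow_mul_le I (p ^ e) (p ^ k) ?_⟩
    rwa [← pow_add]

end helpers

section perf
variable {p : ℕ} [Fact p.Prime] {R Rp : Type} [CommRing R] [CharP R p]
  [CommRing Rp] [IsDomain Rp] [CharP Rp p] [PerfectRing Rp p]

lemma map_frobPow_le (φ : R →+* Rp) (J : Ideal R) (q : ℕ) :
    (frobPow J q).map φ ≤ frobPow (J.map φ) q := by
  rw [frobPow, Ideal.map_span, Ideal.span_le]
  rintro _ ⟨_, ⟨y, hy, rfl⟩, rfl⟩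
  simp only [SetLike.mem_coe, map_pow]
  exact mem_frobPow_of_mem (Ideal.mem_map_of_mem φ hy) q

lemma perf_mem_of_pow_mem {I : Ideal Rp} {z : Rp} {n : ℕ}
    (h : z ^ p ^ n ∈ frobPow I (p ^ n)) : z ∈ I := by
  have heq : frobPow I (p ^ n) = I.map (iterateFrobenius Rp p n) := by
    rw [frobPow, Ideal.map]
    congr 1
  rw [heq] at h
  have hz : iterateFrobenius Rp p n z ∈ I.map (iterateFrobenius Rp p n) := by
    rwa [iterateFrobenius_def]
  obtain ⟨w, hw, hweq⟩ := (Ideal.mem_map_iff_of_surjective _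
    (bijective_iterateFrobenius Rp p n).2).1 hz
  rwa [← (bijective_iterateFrobenius Rp p n).1 hweq]

lemma exists_pow_of_mem_map (φ : R →+* Rp)
    (hgen : ∀ x : Rp, ∃ (e : ℕ) (r : R), x ^ p ^ e = φ r) (J : Ideal R) {z : Rp}
    (hz : z ∈ J.map φ) :
    ∃ (n : ℕ) (r : R), z ^ p ^ n = φ r ∧ r ∈ frobPow J (p ^ n) := by
  have hz' : z ∈ Submodule.span Rp (φ '' (J : Set R)) := hz
  clear hz
  induction hz' using Submodule.span_induction with
  | mem w hw =>
    obtain ⟨j, hj, rfl⟩ := hw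
    exact ⟨0, j, by simp, by simpa using mem_frobPow_of_mem hj 1⟩
  | zero => exact ⟨0, 0, by simp, Ideal.zero_mem _⟩
  | add y z' hy hz' ih1 ih2 =>
    obtain ⟨n1, r1, h1, hr1⟩ := ih1
    obtain ⟨n2, r2, h2, hr2⟩ := ih2
    refine ⟨n1 + n2, r1 ^ p ^ n2 + r2 ^ p ^ n1, ?_, ?_⟩
    · have e1 : y ^ p ^ (n1 + n2) = φ (r1 ^ p ^ n2) := by
        rw [pow_add, pow_mul, h1, map_pow]
      have e2 : z' ^ p ^ (n1 + n2) = φ (r2 ^ p ^ n1) := by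
        rw [add_comm n1 n2, pow_add, pow_mul, h2, map_pow]
      rw [add_pow_char_pow, e1, e2, map_add]
    · refine Ideal.add_mem _ (frobPow_mem_pow n2 hr1) ?_
      rw [add_comm n1 n2]
      exact frobPow_mem_pow n1 hr2
  | smul s z' hz' ih =>
    obtain ⟨n, r, h1, hr⟩ := ih
    obtain ⟨k, t, ht⟩ := hgen s
    refine ⟨k + n, t ^ p ^ n * r ^ p ^ k, ?_, ?_⟩
    · have e1 : s ^ p ^ (k + n) = φ (t ^ p ^ n) := by
        rw [pow_add, pow_mul, ht, map_pow]
      have e2 : z' ^ p ^ (k + n) = φ (r ^ p ^ k) := by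
        rw [add_comm k n, pow_add, pow_mul, h1, map_pow]
      rw [smul_eq_mul, mul_pow, e1, e2, map_mul]
    · rw [add_comm k n]
      exact Ideal.mul_mem_left _ _ (frobPow_mem_pow k hr)

lemma key_iff (φ : R →+* Rp) (hφ : Function.Injective φ)
    (hgen : ∀ x : Rp, ∃ (e : ℕ) (r : R), x ^ p ^ e = φ r) (J : Ideal R) (x : R) (e : ℕ) :
    (∃ z : Rp, z ^ p ^ e = φ x ∧ z ∉ J.map φ) ↔ x ∉ frobClosure p (frobPow J (p ^ e)) := by
  constructor
  · rintro ⟨z, hze, hzJ⟩ hx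
    apply hzJ
    obtain ⟨k, hk⟩ := frobClosure_frobPow_iff.1 hx
    apply perf_mem_of_pow_mem (p := p) (n := e + k)
    have hz2 : z ^ p ^ (e + k) = φ (x ^ p ^ k) := by
      rw [pow_add, pow_mul, hze, map_pow]
    rw [hz2]
    exact map_frobPow_le φ J (p ^ (e + k)) (Ideal.mem_map_of_mem φ hk)
  · intro hx
    have hroot : ((iterateFrobeniusEquiv Rp p e).symm (φ x)) ^ p ^ e = φ x := by
      have := (iterateFrobeniusEquiv Rp p e).apply_symm_apply (φ x)
      rwa [iterateFrobeniusEquiv_def] at this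
    refine ⟨(iterateFrobeniusEquiv Rp p e).symm (φ x), hroot, ?_⟩
    intro hz
    obtain ⟨n, r, hzn, hr⟩ := exists_pow_of_mem_map φ hgen J hz
    apply hx
    rw [frobClosure_frobPow_iff]
    refine ⟨n, ?_⟩
    have heq : φ (x ^ p ^ n) = φ (r ^ p ^ e) := by
      rw [map_pow, map_pow, ← hroot, ← hzn, ← pow_mul, ← pow_mul, ← pow_add, ← pow_add,
        add_comm]
    rw [hφ heq, add_comm e n]
    exact frobPow_mem_pow e hr

end perf

/-- The F-threshold up to Frobenius closure equals
`sup { n/p^e : (𝔞^n)^{1/p^e} ⊄ J R_perf }`, where `R_perf` is a perfection of `R` (a perfect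
domain `Rp` containing `R` all of whose elements have some `p^e`-th power in `R`). -/
theorem stmt9 (p : ℕ) [Fact p.Prime] (R : Type) [CommRing R] [IsDomain R]
    [IsNoetherianRing R] [CharP R p]
    (𝔞 J : Ideal R) (hrad : 𝔞 ≤ J.radical)
    (Rp : Type) [CommRing Rp] [IsDomain Rp] [CharP Rp p] [PerfectRing Rp p]
    (φ : R →+* Rp) (hφ : Function.Injective φ)
    (hgen : ∀ x : Rp, ∃ (e : ℕ) (r : R), x ^ p ^ e = φ r)
    (L : ℝ)
    (hL : Filter.Tendsto
      (fun e : ℕ =>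
        ((sSup {m : ℕ | ∃ x ∈ 𝔞 ^ m, x ∉ frobClosure p (frobPow J (p ^ e))} : ℕ) : ℝ)
          / (p : ℝ) ^ e)
      Filter.atTop (nhds L)) :
    L = sSup {t : ℝ | ∃ m e : ℕ, t = (m : ℝ) / (p : ℝ) ^ e ∧
      ∃ x ∈ 𝔞 ^ m, ∃ z : Rp, z ^ p ^ e = φ x ∧ z ∉ J.map φ} := by
  classical
  set A : ℕ → Set ℕ := fun e => {m : ℕ | ∃ x ∈ 𝔞 ^ m, x ∉ frobClosure p (frobPow J (p ^ e))}
    with hA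
  have hLA : Filter.Tendsto (fun e : ℕ => ((sSup (A e) : ℕ) : ℝ) / (p : ℝ) ^ e)
      Filter.atTop (nhds L) := hL
  have hset : {t : ℝ | ∃ m e : ℕ, t = (m : ℝ) / (p : ℝ) ^ e ∧
      ∃ x ∈ 𝔞 ^ m, ∃ z : Rp, z ^ p ^ e = φ x ∧ z ∉ J.map φ}
      = {t : ℝ | ∃ m e : ℕ, t = (m : ℝ) / (p : ℝ) ^ e ∧ m ∈ A e} := by
    ext t
    simp only [Set.mem_setOf_eq, hA]
    constructor
    · rintro ⟨m, e, rfl, x, hx, z, hz1, hz2⟩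
      exact ⟨m, e, rfl, x, hx, (key_iff φ hφ hgen J x e).1 ⟨z, hz1, hz2⟩⟩
    · rintro ⟨m, e, rfl, x, hx, hz⟩
      obtain ⟨z, hz1, hz2⟩ := (key_iff φ hφ hgen J x e).2 hz
      exact ⟨m, e, rfl, x, hx, z, hz1, hz2⟩
  rw [hset]
  have hp0 : (0:ℝ) < (p : ℝ) := by exact_mod_cast (Fact.out : p.Prime).pos
  by_cases hJ : J = ⊤
  · -- degenerate case : the sets are all empty and both sides are zero
    have hmemall : ∀ (e : ℕ) (x : R), x ∈ frobClosure p (frobPow J (p ^ e)) := by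
      intro e x
      refine ⟨0, ?_⟩
      rw [pow_zero, pow_one]
      have hx : x ∈ frobPow J (p ^ e) := by
        have h1 : (1 : R) ∈ frobPow J (p ^ e) := by
          simpa using mem_frobPow_of_mem (by simp [hJ] : (1:R) ∈ J) (p ^ e)
        exact Ideal.eq_top_iff_one _ |>.2 h1 ▸ Submodule.mem_top
      exact Ideal.subset_span ⟨x, hx, pow_one x⟩
    have hAe : ∀ e, A e = ∅ := by
      intro e
      rw [Set.eq_empty_iff_forall_notMem]
      rintro m ⟨x, hx, hxc⟩
      exact hxc (hmemall e x)
    have hL0 : L = 0 := by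
      refine tendsto_nhds_unique hLA ?_
      have hconst : (fun e : ℕ => ((sSup (A e) : ℕ) : ℝ) / (p : ℝ) ^ e)
          = fun _ : ℕ => (0:ℝ) := by
        funext e
        rw [hAe e, csSup_empty]
        simp
      rw [hconst]
      exact tendsto_const_nhds
    have hTe : {t : ℝ | ∃ m e : ℕ, t = (m : ℝ) / (p : ℝ) ^ e ∧ m ∈ A e} = ∅ := by
      rw [Set.eq_empty_iff_forall_notMem]
      rintro t ⟨m, e, rfl, hm⟩
      rw [hAe e] at hm
      exact hm
    rw [hTe, Real.sSup_empty, hL0]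
  · -- main case
    have hone : ∀ e, (1 : R) ∉ frobClosure p (frobPow J (p ^ e)) := by
      intro e h
      obtain ⟨k, hk⟩ := frobClosure_frobPow_iff.1 h
      rw [one_pow] at hk
      exact hJ ((Ideal.eq_top_iff_one J).2
        (frobPow_le J (pow_pos (Fact.out : p.Prime).pos _) hk))
    have h0 : ∀ e, 0 ∈ A e := by
      intro e
      exact ⟨1, by simp, hone e⟩
    have hbdd : ∀ e, BddAbove (A e) := by
      intro e
      have hrad' : 𝔞 ≤ (frobPow J (p ^ e)).radical := by
        intro x hx
        obtain ⟨n, hn⟩ := hrad hx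
        exact ⟨n * p ^ e, by rw [pow_mul]; exact mem_frobPow_of_mem hn (p ^ e)⟩
      obtain ⟨N, hN⟩ := Ideal.exists_pow_le_of_le_radical_of_fg hrad'
        (IsNoetherian.noetherian 𝔞)
      refine ⟨N, ?_⟩
      rintro m ⟨x, hx, hxc⟩
      by_contra hlt
      push_neg at hlt
      apply hxc
      refine ⟨0, ?_⟩
      rw [pow_zero, pow_one]
      have hxJ : x ∈ frobPow J (p ^ e) := hN (Ideal.pow_le_pow_right hlt.le hx)
      exact Ideal.subset_span ⟨x, hxJ, pow_one x⟩
    have hν : ∀ e, sSup (A e) ∈ A e := fun e => Nat.sSup_mem ⟨0, h0 e⟩ (hbdd e)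
    have hstep : ∀ e, p * sSup (A e) ∈ A (e + 1) := by
      intro e
      obtain ⟨x, hx, hxc⟩ := hν e
      refine ⟨x ^ p, ?_, ?_⟩
      · rw [mul_comm, pow_mul]
        exact Ideal.pow_mem_pow hx p
      · intro h
        apply hxc
        rw [frobClosure_frobPow_iff] at h ⊢
        obtain ⟨k, hk⟩ := h
        refine ⟨1 + k, ?_⟩
        have hxp : x ^ p ^ (1 + k) = (x ^ p) ^ p ^ k := by
          rw [← pow_mul, pow_add, pow_one]
        rw [hxp, show e + (1 + k) = e + 1 + k by ring]
        exact hk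
    have hmono : Monotone (fun e : ℕ => ((sSup (A e) : ℕ) : ℝ) / (p : ℝ) ^ e) := by
      apply monotone_nat_of_le_succ
      intro e
      have hle : p * sSup (A e) ≤ sSup (A (e + 1)) := le_csSup (hbdd (e + 1)) (hstep e)
      rw [div_le_div_iff₀ (by positivity) (by positivity)]
      calc ((sSup (A e) : ℕ) : ℝ) * (p : ℝ) ^ (e + 1)
          = (((p : ℕ) * sSup (A e) : ℕ) : ℝ) * (p : ℝ) ^ e := by push_cast; ring
        _ ≤ ((sSup (A (e + 1)) : ℕ) : ℝ) * (p : ℝ) ^ e := by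
            apply mul_le_mul_of_nonneg_right _ (by positivity)
            exact_mod_cast hle
    have hlub := isLUB_of_tendsto_atTop hmono hLA
    have hTlub : IsLUB {t : ℝ | ∃ m e : ℕ, t = (m : ℝ) / (p : ℝ) ^ e ∧ m ∈ A e} L := by
      constructor
      · rintro t ⟨m, e, rfl, hm⟩
        have h1 : (m : ℝ) / (p : ℝ) ^ e ≤ ((sSup (A e) : ℕ) : ℝ) / (p : ℝ) ^ e := by
          gcongr
          exact_mod_cast le_csSup (hbdd e) hm
        exact h1.trans (hlub.1 ⟨e, rfl⟩)
      · intro b hb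
        apply hlub.2
        rintro t ⟨e, rfl⟩
        exact hb ⟨sSup (A e), e, rfl, hν e⟩
    have hne : Set.Nonempty {t : ℝ | ∃ m e : ℕ, t = (m : ℝ) / (p : ℝ) ^ e ∧ m ∈ A e} :=
      ⟨0, 0, 0, by simp, h0 0⟩
    exact (hTlub.csSup_eq hne).symm
end

section
/- Let R be a complete local Noetherian domain of prime characteristic p, and let B be a perfect balanced big Cohen-Macaulay R-algebra capturing tight closure (i.e., JB \cap R = J^* for all ideals J \subseteq R). Then for ideals \mathfrak{a}, J with \mathfrak{a} \subseteq \sqrt{J}, the tight-closure F-threshold satisfies c_*^J(\mathfrak{a}) = sup\{ n/p^e : (\mathfrak{a}^n)^{1/p^e} \not\subseteq JB \}. -/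
/-- `x` is a regular sequence on `B`: each `x i` is a nonzerodivisor modulo the previous ones. -/
def IsRegSeq {B : Type} [CommRing B] {n : ℕ} (x : Fin n → B) : Prop :=
  ∀ i : Fin n, ∀ b : B,
    x i * b ∈ Ideal.span {y | ∃ j : Fin n, j < i ∧ y = x j} →
    b ∈ Ideal.span {y | ∃ j : Fin n, j < i ∧ y = x j}

/-- `B` is a balanced big Cohen-Macaulay algebra over the Noetherian local ring `T`:
`𝔪_T B ≠ B` and every system of parameters of `T` is a regular sequence on `B`. -/
def IsBalancedBigCM (T : Type) [CommRing T] [IsLocalRing T]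
    (B : Type) [CommRing B] [Algebra T B] : Prop :=
  (IsLocalRing.maximalIdeal T).map (algebraMap T B) ≠ ⊤ ∧
  ∀ (n : ℕ) (x : Fin n → T), (n : WithBot ℕ∞) = ringKrullDim T →
    (Ideal.span (Set.range x)).radical = IsLocalRing.maximalIdeal T →
    IsRegSeq (fun i => algebraMap T B (x i))


lemma mem_frobPow {A : Type} [CommRing A] {I : Ideal A} {x : A} (hx : x ∈ I) (q : ℕ) :
    x ^ q ∈ frobPow I q :=
  Ideal.subset_span ⟨x, hx, rfl⟩

lemma frobPow_eq_map {A : Type} [CommRing A] (p : ℕ) [ExpChar A p] (I : Ideal A) (k : ℕ) :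
    frobPow I (p ^ k) = I.map (iterateFrobenius A p k) := by
  have h : ((· ^ p ^ k) '' (I : Set A)) = ⇑(iterateFrobenius A p k) '' (I : Set A) := by
    ext x; simp [iterateFrobenius_def]
  show Ideal.span _ = Ideal.span _
  rw [h]

lemma frobPow_frobPow {A : Type} [CommRing A] (p : ℕ) [ExpChar A p] (I : Ideal A) (a b : ℕ) :
    frobPow (frobPow I (p ^ a)) (p ^ b) = frobPow I (p ^ (a + b)) := by
  rw [frobPow_eq_map p _ a, frobPow_eq_map p _ b, frobPow_eq_map p _ (a + b), Ideal.map_map]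
  have h : (iterateFrobenius A p b).comp (iterateFrobenius A p a) = iterateFrobenius A p (a + b) := by
    ext x; simp [iterateFrobenius_def, ← pow_mul, ← pow_add]
  rw [h]

lemma frobPow_one {A : Type} [CommRing A] (I : Ideal A) : frobPow I 1 = I := by
  simp [frobPow, Set.image_id']

lemma frobPow_le_self {A : Type} [CommRing A] (I : Ideal A) {q : ℕ} (hq : q ≠ 0) :
    frobPow I q ≤ I := by
  rw [frobPow, Ideal.span_le]
  rintro _ ⟨y, hy, rfl⟩
  exact Ideal.pow_mem_of_mem I hy q (Nat.pos_of_ne_zero hq)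

lemma subset_tightClosure {A : Type} [CommRing A] [Nontrivial A] (p : ℕ) {I : Ideal A} {x : A}
    (hx : x ∈ I) : x ∈ tightClosure p I :=
  ⟨1, one_ne_zero, fun e => by rw [one_mul]; exact mem_frobPow hx _⟩


/-- For a complete local Noetherian domain `R` of characteristic `p` and a perfect balanced
big Cohen-Macaulay `R`-algebra `B` capturing tight closure, the tight-closure F-threshold
satisfies `c_*^J(𝔞) = sup { n/p^e : (𝔞^n)^{1/p^e} ⊄ JB }`. -/
theorem stmt10 (p : ℕ) [Fact p.Prime] (R : Type) [CommRing R] [IsDomain R]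
    [IsNoetherianRing R] [IsLocalRing R] [CharP R p]
    [IsAdicComplete (IsLocalRing.maximalIdeal R) R]
    (B : Type) [CommRing B] [Algebra R B] [ExpChar B p] [PerfectRing B p]
    (hBCM : IsBalancedBigCM R B)
    (hcap : ∀ (I : Ideal R) (x : R),
      algebraMap R B x ∈ I.map (algebraMap R B) ↔ x ∈ tightClosure p I)
    (𝔞 J : Ideal R) (hrad : 𝔞 ≤ J.radical)
    (L : ℝ)
    (hL : Filter.Tendsto
      (fun e : ℕ =>
        ((sSup {m : ℕ | ∃ x ∈ 𝔞 ^ m, x ∉ tightClosure p (frobPow J (p ^ e))} : ℕ) : ℝ)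
          / (p : ℝ) ^ e)
      Filter.atTop (nhds L)) :
    L = sSup {t : ℝ | ∃ m e : ℕ, t = (m : ℝ) / (p : ℝ) ^ e ∧
      ∃ x ∈ 𝔞 ^ m, ∃ z : B, z ^ p ^ e = algebraMap R B x ∧
        z ∉ J.map (algebraMap R B)} := by
  have hp : p.Prime := Fact.out
  haveI : ExpChar R p := ExpChar.prime hp
  set f := algebraMap R B with hf
  set S := {t : ℝ | ∃ m e : ℕ, t = (m : ℝ) / (p : ℝ) ^ e ∧
      ∃ x ∈ 𝔞 ^ m, ∃ z : B, z ^ p ^ e = f x ∧ z ∉ J.map f} with hS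
  set Nset : ℕ → Set ℕ :=
    fun e => {m : ℕ | ∃ x ∈ 𝔞 ^ m, x ∉ tightClosure p (frobPow J (p ^ e))} with hNset
  set ν : ℕ → ℕ := fun e => sSup (Nset e) with hν
  have hL' : Filter.Tendsto (fun e : ℕ => ((ν e : ℕ) : ℝ) / (p : ℝ) ^ e)
      Filter.atTop (nhds L) := hL
  have hp0 : (0 : ℝ) < (p : ℝ) := by exact_mod_cast hp.pos
  -- key equivalence
  have key : ∀ (e : ℕ) (x : R),
      (∃ z : B, z ^ p ^ e = f x ∧ z ∉ J.map f) ↔ x ∉ tightClosure p (frobPow J (p ^ e)) := by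
    intro e x
    have hbij : Function.Bijective (iterateFrobenius B p e) :=
      (iterateFrobeniusEquiv B p e).bijective
    have hz : ∀ z : B, z ^ p ^ e = f x →
        (z ∈ J.map f ↔ x ∈ tightClosure p (frobPow J (p ^ e))) := by
      intro z hze
      rw [← hcap]
      have h1 : (frobPow J (p ^ e)).map f = (J.map f).map (iterateFrobenius B p e) := by
        rw [frobPow_eq_map p J e, Ideal.map_map, Ideal.map_map]
        have : (iterateFrobenius B p e).comp f = f.comp (iterateFrobenius R p e) := by
          ext y; simp [iterateFrobenius_def, map_pow]
        rw [this]
      rw [h1, ← hze]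
      constructor
      · intro h
        simpa only [iterateFrobenius_def] using
          Ideal.mem_map_of_mem (iterateFrobenius B p e) h
      · intro h
        have h2 : z ∈ Ideal.comap (iterateFrobenius B p e) ((J.map f).map (iterateFrobenius B p e)) := by
          rw [Ideal.mem_comap, iterateFrobenius_def]
          exact h
        rwa [Ideal.comap_map_of_bijective _ hbij] at h2
    constructor
    · rintro ⟨z, hze, hzJ⟩ hx
      exact hzJ ((hz z hze).mpr hx)
    · intro hx
      refine ⟨(iterateFrobeniusEquiv B p e).symm (f x), ?_, ?_⟩
      · have := (iterateFrobeniusEquiv B p e).apply_symm_apply (f x)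
        rwa [iterateFrobeniusEquiv_def] at this
      · intro hmem
        have h1 : ((iterateFrobeniusEquiv B p e).symm (f x)) ^ p ^ e = f x := by
          have := (iterateFrobeniusEquiv B p e).apply_symm_apply (f x)
          rwa [iterateFrobeniusEquiv_def] at this
        exact hx ((hz _ h1).mp hmem)
  -- boundedness
  have hbdd : ∀ e, BddAbove (Nset e) := by
    intro e
    have hrad2 : 𝔞 ≤ (frobPow J (p ^ e)).radical := by
      refine hrad.trans ?_
      have hJ : J ≤ (frobPow J (p ^ e)).radical := fun x hx => ⟨p ^ e, mem_frobPow hx _⟩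
      calc J.radical ≤ ((frobPow J (p ^ e)).radical).radical := Ideal.radical_mono hJ
        _ = (frobPow J (p ^ e)).radical := (frobPow J (p ^ e)).radical_idem
    obtain ⟨N, hN⟩ := Ideal.exists_pow_le_of_le_radical_of_fg hrad2 (IsNoetherian.noetherian 𝔞)
    refine ⟨N, fun m hm => ?_⟩
    obtain ⟨x, hxm, hxt⟩ := hm
    by_contra h
    push_neg at h
    exact hxt (subset_tightClosure p (hN (Ideal.pow_le_pow_right h.le hxm)))
  -- step lemma
  have step : ∀ (e : ℕ) (x : R), x ∉ tightClosure p (frobPow J (p ^ e)) →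
      x ^ p ∉ tightClosure p (frobPow J (p ^ (e + 1))) := by
    intro e x hx hxp
    apply hx
    rcases eq_or_ne x 0 with rfl | hx0
    · exact subset_tightClosure p ((frobPow J (p ^ e)).zero_mem)
    obtain ⟨c, hc, hce⟩ := hxp
    have H : ∀ k : ℕ, c * x ^ p ^ (k + 1) ∈ frobPow (frobPow J (p ^ e)) (p ^ (k + 1)) := by
      intro k
      have h1 := hce k
      rw [← pow_mul, ← pow_succ'] at h1
      rwa [frobPow_frobPow, show e + 1 + k = e + (k + 1) by omega, ← frobPow_frobPow] at h1
    have hpp : p - 1 + 1 = p := by have := hp.pos; omega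
    refine ⟨c * x ^ (p - 1), mul_ne_zero hc (pow_ne_zero _ hx0), fun k => ?_⟩
    cases k with
    | zero =>
      rw [pow_zero, frobPow_one]
      have h1 : c * x ^ (p - 1) * x ^ 1 = c * x ^ p := by
        rw [pow_one, mul_assoc, ← pow_succ, hpp]
      rw [h1]
      have h2 := H 0
      rw [pow_one] at h2
      exact frobPow_le_self _ hp.ne_zero h2
    | succ k =>
      have h1 : c * x ^ (p - 1) * x ^ p ^ (k + 1) = x ^ (p - 1) * (c * x ^ p ^ (k + 1)) := by
        ring
      rw [h1]
      exact Ideal.mul_mem_left _ _ (H k)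
  -- monotonicity
  have hmono : Monotone (fun e : ℕ => ((ν e : ℕ) : ℝ) / (p : ℝ) ^ e) := by
    apply monotone_nat_of_le_succ
    intro e
    have hνe : ν e * p ≤ ν (e + 1) := by
      rcases Set.eq_empty_or_nonempty (Nset e) with hemp | hne
      · simp [hν, hemp]
      · obtain ⟨x, hxm, hxt⟩ := Nat.sSup_mem hne (hbdd e)
        refine le_csSup (hbdd (e + 1)) ⟨x ^ p, ?_, step e x hxt⟩
        rw [pow_mul]
        exact Ideal.pow_mem_pow hxm p
    rw [div_le_div_iff₀ (by positivity) (by positivity)]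
    have h1 : ((ν e : ℝ)) * p ≤ (ν (e + 1) : ℝ) := by exact_mod_cast hνe
    calc ((ν e : ℝ)) * (p : ℝ) ^ (e + 1) = ((ν e : ℝ) * p) * (p : ℝ) ^ e := by ring
      _ ≤ (ν (e + 1) : ℝ) * (p : ℝ) ^ e :=
        mul_le_mul_of_nonneg_right h1 (by positivity)
  have hgle : ∀ e, ((ν e : ℕ) : ℝ) / (p : ℝ) ^ e ≤ L := fun e => hmono.ge_of_tendsto hL' e
  have hSle : ∀ t ∈ S, t ≤ L := by
    rintro t ⟨m, e, rfl, x, hxm, z, hze, hzJ⟩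
    have hx : x ∉ tightClosure p (frobPow J (p ^ e)) := (key e x).mp ⟨z, hze, hzJ⟩
    have hm : m ≤ ν e := le_csSup (hbdd e) ⟨x, hxm, hx⟩
    refine le_trans ?_ (hgle e)
    gcongr

  rcases Set.eq_empty_or_nonempty S with hemp | hne
  · have hNe : ∀ e, Nset e = ∅ := by
      intro e
      rw [Set.eq_empty_iff_forall_notMem]
      rintro m ⟨x, hxm, hxt⟩
      obtain ⟨z, hze, hzJ⟩ := (key e x).mpr hxt
      have : ((m : ℝ) / (p : ℝ) ^ e) ∈ S := ⟨m, e, rfl, x, hxm, z, hze, hzJ⟩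
      rw [hemp] at this
      exact this
    have hν0 : (fun e : ℕ => ((ν e : ℕ) : ℝ) / (p : ℝ) ^ e) = fun _ => (0 : ℝ) := by
      funext e
      simp [hν, hNe e]
    rw [hν0] at hL'
    have hL0 : L = 0 := tendsto_nhds_unique hL' tendsto_const_nhds
    rw [hL0, hemp, Real.sSup_empty]
  · have hbddS : BddAbove S := ⟨L, hSle⟩
    have hS0 : (0 : ℝ) ≤ sSup S := by
      obtain ⟨t, ht⟩ := hne
      have h0t : (0 : ℝ) ≤ t := by
        obtain ⟨m, e, rfl, -⟩ := ht
        positivity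
      exact le_trans h0t (le_csSup hbddS ht)
    have hle2 : ∀ e, ((ν e : ℕ) : ℝ) / (p : ℝ) ^ e ≤ sSup S := by
      intro e
      rcases Set.eq_empty_or_nonempty (Nset e) with hemp' | hne'
      · have hz : ν e = 0 := by simp [hν, hemp']
        rw [hz]
        simpa using hS0
      · obtain ⟨x, hxm, hxt⟩ := Nat.sSup_mem hne' (hbdd e)
        obtain ⟨z, hze, hzJ⟩ := (key e x).mpr hxt
        exact le_csSup hbddS ⟨ν e, e, rfl, x, hxm, z, hze, hzJ⟩
    exact le_antisymm (le_of_tendsto' hL' hle2) (csSup_le hne hSle)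
end

section
/- Let (R,\mathfrak{m}) be a complete Noetherian local domain, B a balanced big Cohen-Macaulay R^+-algebra, and \mathfrak{a}, \mathfrak{b}, I, J ideals of R. Then: (1) \mathfrak{a} \subseteq \mathfrak{b} implies c_B^J(\mathfrak{a}) \leq c_B^J(\mathfrak{b}); (2) J \subseteq I implies c_B^I(\mathfrak{a}) \leq c_B^J(\mathfrak{a}); (3) c_B^J(\mathfrak{a}) = c_B^J(\overline{\mathfrak{a}}); and (4) c_B^J(\mathfrak{a}^n) = (1/n)\,c_B^J(\mathfrak{a}) for every integer n \geq 1. -/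
set_option synthInstance.maxHeartbeats 1000000
set_option maxHeartbeats 1000000
open scoped NNReal

/-- `(𝔞 R⁺)_{>t} ⊆ J B`. -/
def subGT (R : Type) [CommRing R] [IsDomain R] (B : Type) [CommRing B] [Algebra R B]
    [Algebra (↥(Rplus R)) B] (𝔞 J : Ideal R) (t : ℝ) : Prop :=
  ∀ x : ↥(Rplus R), (x : Kbar R) ∈ valFracGT R (Rplus R) (extIdeal R (Rplus R) 𝔞) t →
    algebraMap (↥(Rplus R)) B x ∈ J.map (algebraMap R B)

/-- The BCM-threshold `c_B^J(𝔞) = sup { t ∈ ℝ : (𝔞 R⁺)_{>t} ⊄ J B }`, as an extended real. -/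
noncomputable def cBCM (R : Type) [CommRing R] [IsDomain R] (B : Type) [CommRing B]
    [Algebra R B] [Algebra (↥(Rplus R)) B] (𝔞 J : Ideal R) : EReal :=
  sSup {t : EReal | ∃ s : ℝ, t = (s : EReal) ∧ ¬ subGT R B 𝔞 J s}

/-- `B` satisfies the Briançon-Skoda property: for each ideal `J` of `R` generated by `l`
elements and each finite extension `R ⊆ S ⊆ R⁺`,
`closure(J^{m+l-1} S) ⊆ J^m B` for every `m > 0`. -/
def BrianconSkoda (R : Type) [CommRing R] [IsDomain R] (B : Type) [CommRing B] [Algebra R B]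
    [Algebra (↥(Rplus R)) B] : Prop :=
  ∀ (l : ℕ) (f : Fin l → R) (m : ℕ), 0 < m →
    ∀ (S : Subalgebra R (Kbar R)) (hS : S ≤ Rplus R), Module.Finite R ↥S →
      ∀ x : ↥S,
        x ∈ idealIntClosure
          ((Ideal.map (algebraMap R ↥S) (Ideal.span (Set.range f))) ^ (m + l - 1)) →
        algebraMap (↥(Rplus R)) B (Subalgebra.inclusion hS x) ∈
          ((Ideal.span (Set.range f)) ^ m).map (algebraMap R B)

/-!
Each part reduces to a statement about the strict valuative powers `(𝔞 R⁺)_{>t}`, checked one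
valuation `v` (with `v ≤ 1` on `R⁺`) at a time. As `R` is Noetherian, `v` attains its maximum on
`𝔞` at some `a ∈ 𝔞`; then `v a` also bounds `v` on the integral closure of `𝔞`, `(v a) ^ n` bounds
`v` on `𝔞 ^ n`, and these bounds pass to the extended ideals in `R⁺`. For `t ≥ 0` a witness `y`
of `v x < (v y) ^ t` can therefore be replaced by `a`; for `t < 0` smaller values are better and
`y a`, resp. `y` itself, serves. Hence `(𝔞 R⁺)_{>t} = (𝔞̄ R⁺)_{>t}` and
`(𝔞 ^ n R⁺)_{>t} = (𝔞 R⁺)_{>n t}`, and the threshold, a supremum over `t`, is rescaled by `1 / n`.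
-/

namespace Valuation

section Span

variable {A K Γ₀ : Type*} [CommRing A] [CommRing K] [Algebra A K]
  [LinearOrderedCommMonoidWithZero Γ₀] {v : Valuation K Γ₀}

theorem map_le_of_mem_span (hv : ∀ a, v (algebraMap A K a) ≤ 1) {s : Set K} {C : Γ₀}
    (hs : ∀ x ∈ s, v x ≤ C) {x : K} (hx : x ∈ Submodule.span A s) : v x ≤ C := by
  induction hx using Submodule.span_induction with
  | mem x hx => exact hs x hx
  | zero => simp
  | add x y _ _ hx hy => exact (v.map_add x y).trans (max_le hx hy)
  | smul a x _ hx =>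
    rw [Algebra.smul_def, map_mul]
    exact mul_le_of_le_one_of_le (hv a) hx

end Span

section Ideal

variable {R : Type} {Γ₀ : Type*} [CommRing R] [LinearOrderedCommMonoidWithZero Γ₀]
  {w : Valuation R Γ₀} {I : Ideal R} {M : Γ₀}

theorem map_le_pow_of_mem_pow (hw : ∀ r, w r ≤ 1) (hI : ∀ a ∈ I, w a ≤ M) :
    ∀ i : ℕ, ∀ x ∈ I ^ i, w x ≤ M ^ i
  | 0, x, _ => by simpa using hw x
  | i + 1, x, hx => by
    rw [pow_succ] at hx
    refine Submodule.mul_induction_on hx (fun a ha b hb => ?_) fun x y hx hy => ?_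
    · rw [map_mul, pow_succ]
      exact mul_le_mul' (map_le_pow_of_mem_pow hw hI i a ha) (hI b hb)
    · exact (w.map_add x y).trans (max_le hx hy)

theorem exists_forall_map_le [IsNoetherianRing R] (hw : ∀ r, w r ≤ 1) (I : Ideal R) :
    ∃ a ∈ I, ∀ x ∈ I, w x ≤ w a := by
  obtain ⟨s, rfl⟩ := (IsNoetherian.noetherian I : I.FG)
  rcases s.eq_empty_or_nonempty with rfl | hs
  · exact ⟨0, zero_mem _, by simp⟩
  obtain ⟨a, ha, hmax⟩ := s.exists_max_image w hs
  exact ⟨a, Ideal.subset_span ha, fun x hx => map_le_of_mem_span (A := R) hw hmax hx⟩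

/-- An equation of integral dependence `z ^ n = -∑ cᵢ z ^ (n - i)` with `cᵢ ∈ I ^ i` is
impossible once `w z > M ≥ w` on `I`: every term on the right has value `< (w z) ^ n`. -/
theorem map_le_of_mem_idealIntClosure {w : Valuation R ℝ≥0} {M : ℝ≥0} (hw : ∀ r, w r ≤ 1)
    (hI : ∀ a ∈ I, w a ≤ M) {z : R} (hz : z ∈ idealIntClosure I) : w z ≤ M := by
  obtain ⟨n, hn, c, hc, heq⟩ := hz
  by_contra! hlt
  have hz0 : 0 < w z := (zero_le (a := M)).trans_lt hlt
  have hsum : w (∑ i ∈ Finset.Icc 1 n, c i * z ^ (n - i)) < w z ^ n := by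
    refine w.map_sum_lt (pow_pos hz0 n).ne' fun i hi => ?_
    obtain ⟨hi1, hin⟩ := Finset.mem_Icc.mp hi
    calc w (c i * z ^ (n - i)) ≤ M ^ i * w z ^ (n - i) := by
          rw [map_mul, map_pow]
          exact mul_le_mul' (map_le_pow_of_mem_pow hw hI i _ (hc i hi1 hin)) le_rfl
      _ < w z ^ i * w z ^ (n - i) :=
          mul_lt_mul_of_pos_right (pow_lt_pow_left₀ hlt (zero_le (a := M)) (by omega))
            (pow_pos hz0 _)
      _ = w z ^ n := by rw [← pow_add, Nat.add_sub_cancel' hin]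
  have hzn : z ^ n = -∑ i ∈ Finset.Icc 1 n, c i * z ^ (n - i) := by linear_combination heq
  rw [← map_pow, hzn, map_neg] at hsum
  exact lt_irrefl _ hsum

end Ideal

end Valuation

theorem le_span_idealIntClosure {R : Type} [CommRing R] (I : Ideal R) :
    I ≤ Ideal.span (idealIntClosure I) :=
  fun a ha => Ideal.subset_span ⟨1, one_pos, fun _ => -a, fun i hi1 hi => by
    simpa [le_antisymm hi hi1] using I.neg_mem ha, by simp⟩

section ExtIdeal

variable {R : Type} [CommRing R] [IsDomain R] {A : Subalgebra R (Kbar R)} {I I' : Ideal R}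

theorem algebraMap_mem_extIdeal {a : R} (ha : a ∈ I) :
    algebraMap R (Kbar R) a ∈ extIdeal R A I :=
  Submodule.subset_span ⟨a, ha, rfl⟩

theorem extIdeal_mono (h : I ≤ I') : extIdeal R A I ⊆ extIdeal R A I' :=
  Submodule.span_mono (Set.image_mono h)

theorem extIdeal_subset : extIdeal R A I ⊆ A := by
  intro y hy
  have hrange : Submodule.span A (algebraMap R (Kbar R) '' I) ≤
      LinearMap.range (Algebra.linearMap A (Kbar R)) :=
    Submodule.span_le.mpr <| by
      rintro _ ⟨a, -, rfl⟩
      exact ⟨algebraMap R A a, rfl⟩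
  obtain ⟨b, rfl⟩ := hrange hy
  exact b.2

theorem mul_mem_extIdeal {y z : Kbar R} (hy : y ∈ A) (hz : z ∈ extIdeal R A I) :
    y * z ∈ extIdeal R A I :=
  Submodule.smul_mem _ ⟨y, hy⟩ hz

theorem pow_mem_extIdeal {y : Kbar R} (hy : y ∈ extIdeal R A I) (n : ℕ) :
    y ^ n ∈ extIdeal R A (I ^ n) := by
  have hpow := Submodule.pow_mem_pow _ hy n
  rw [Submodule.span_pow, ← Set.image_pow] at hpow
  exact Submodule.span_mono (Set.image_mono (Submodule.pow_subset_pow _)) hpow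

variable {v : Valuation (Kbar R) ℝ≥0}

theorem Valuation.map_le_of_mem_extIdeal (hv : ∀ a ∈ A, v a ≤ 1) {C : ℝ≥0}
    (hI : ∀ a ∈ I, v (algebraMap R (Kbar R) a) ≤ C) {y : Kbar R} (hy : y ∈ extIdeal R A I) :
    v y ≤ C :=
  v.map_le_of_mem_span (A := A) (fun a => hv a a.2) (by rintro _ ⟨a, ha, rfl⟩; exact hI a ha) hy

end ExtIdeal

section Noetherian

variable {R : Type} [CommRing R] [IsDomain R] [IsNoetherianRing R] {A : Subalgebra R (Kbar R)}
  {v : Valuation (Kbar R) ℝ≥0} {I : Ideal R} {y : Kbar R}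

theorem Valuation.exists_map_le_of_mem_extIdeal_span_idealIntClosure (hv : ∀ a ∈ A, v a ≤ 1)
    (hy : y ∈ extIdeal R A (Ideal.span (idealIntClosure I))) :
    ∃ a ∈ I, v y ≤ v (algebraMap R (Kbar R) a) := by
  set w := v.comap (algebraMap R (Kbar R))
  have hw : ∀ r, w r ≤ 1 := fun r => hv _ (A.algebraMap_mem r)
  obtain ⟨a, ha, hmax⟩ := w.exists_forall_map_le hw I
  refine ⟨a, ha, v.map_le_of_mem_extIdeal hv (fun b hb => ?_) hy⟩
  exact w.map_le_of_mem_span (A := R) hw (fun z hz => w.map_le_of_mem_idealIntClosure hw hmax hz) hb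

theorem Valuation.exists_map_le_pow_of_mem_extIdeal_pow (hv : ∀ a ∈ A, v a ≤ 1) {n : ℕ}
    (hy : y ∈ extIdeal R A (I ^ n)) : ∃ a ∈ I, v y ≤ v (algebraMap R (Kbar R) a) ^ n := by
  set w := v.comap (algebraMap R (Kbar R))
  have hw : ∀ r, w r ≤ 1 := fun r => hv _ (A.algebraMap_mem r)
  obtain ⟨a, ha, hmax⟩ := w.exists_forall_map_le hw I
  exact ⟨a, ha, v.map_le_of_mem_extIdeal hv (w.map_le_pow_of_mem_pow hw hmax n) hy⟩

end Noetherian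

section ValFracGT

variable {R : Type} [CommRing R] [IsDomain R] {A : Subalgebra R (Kbar R)}

theorem valFracGT_subset_of_forall_exists {J J' : Set (Kbar R)} {t t' : ℝ}
    (h : ∀ v : Valuation (Kbar R) ℝ≥0, (∀ a ∈ A, v a ≤ 1) →
      ∀ y ∈ J, 0 < v y ^ t → ∃ y' ∈ J', v y ^ t ≤ v y' ^ t') :
    valFracGT R A J t ⊆ valFracGT R A J' t' := by
  rintro x ⟨hxA, hx⟩
  refine ⟨hxA, fun v hv => ?_⟩
  obtain ⟨y, hy, hlt⟩ := hx v hv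
  obtain ⟨y', hy', hle⟩ := h v hv y hy ((zero_le (a := v x)).trans_lt hlt)
  exact ⟨y', hy', hlt.trans_le hle⟩

theorem valFracGT_mono {J J' : Set (Kbar R)} (h : J ⊆ J') (t : ℝ) :
    valFracGT R A J t ⊆ valFracGT R A J' t :=
  valFracGT_subset_of_forall_exists fun _ _ y hy _ => ⟨y, h hy, le_rfl⟩

theorem valFracGT_extIdeal_span_idealIntClosure [IsNoetherianRing R] (I : Ideal R) (t : ℝ) :
    valFracGT R A (extIdeal R A (Ideal.span (idealIntClosure I))) t =
      valFracGT R A (extIdeal R A I) t := by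
  refine subset_antisymm (valFracGT_subset_of_forall_exists fun v hv y hy hpos => ?_)
    (valFracGT_mono (extIdeal_mono (le_span_idealIntClosure I)) t)
  · obtain ⟨a, ha, hya⟩ := v.exists_map_le_of_mem_extIdeal_span_idealIntClosure hv hy
    rcases le_or_gt 0 t with ht | ht
    · exact ⟨_, algebraMap_mem_extIdeal ha, NNReal.rpow_le_rpow hya ht⟩
    have hy0 : 0 < v y :=
      pos_iff_ne_zero.mpr fun h0 => hpos.ne' ((NNReal.rpow_eq_zero ht.ne).mpr h0)
    refine ⟨y * algebraMap R (Kbar R) a,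
      mul_mem_extIdeal (extIdeal_subset hy) (algebraMap_mem_extIdeal ha), ?_⟩
    rw [map_mul]
    refine NNReal.rpow_le_rpow_of_nonpos (mul_pos hy0 (hy0.trans_le hya)) ?_ ht.le
    exact mul_le_of_le_one_right' (hv _ (A.algebraMap_mem a))

theorem valFracGT_extIdeal_pow [IsNoetherianRing R] (I : Ideal R) {n : ℕ} (hn : 1 ≤ n) (t : ℝ) :
    valFracGT R A (extIdeal R A (I ^ n)) t = valFracGT R A (extIdeal R A I) (n * t) := by
  refine subset_antisymm (valFracGT_subset_of_forall_exists fun v hv y hy hpos => ?_)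
    (valFracGT_subset_of_forall_exists fun v _ y hy _ => ⟨y ^ n, pow_mem_extIdeal hy n, ?_⟩)
  · rcases le_or_gt 0 t with ht | ht
    · obtain ⟨a, ha, hya⟩ := v.exists_map_le_pow_of_mem_extIdeal_pow hv hy
      refine ⟨_, algebraMap_mem_extIdeal ha, ?_⟩
      rw [NNReal.rpow_natCast_mul]
      exact NNReal.rpow_le_rpow hya ht
    have hy0 : 0 < v y :=
      pos_iff_ne_zero.mpr fun h0 => hpos.ne' ((NNReal.rpow_eq_zero ht.ne).mpr h0)
    refine ⟨y, extIdeal_mono (Ideal.pow_le_self (by omega)) hy, ?_⟩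
    refine NNReal.rpow_le_rpow_of_exponent_ge hy0 (hv y (extIdeal_subset hy)) ?_
    have : (1 : ℝ) ≤ n := by exact_mod_cast hn
    nlinarith
  · rw [map_pow, NNReal.rpow_natCast_mul]

end ValFracGT

namespace EReal

theorem sSup_image_div {c : EReal} (hc : 0 < c) (hc' : c ≠ ⊤) (S : Set EReal) :
    sSup ((· / c) '' S) = sSup S / c := by
  let e : EReal ≃o EReal := (strictMono_div_right_of_pos hc hc').orderIsoOfRightInverse _ (· * c)
    fun x => show x * c / c = x by rw [← mul_div, div_self hc.ne_bot hc' hc.ne', mul_one]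
  rw [sSup_image]
  exact (e.map_sSup S).symm

theorem sSup_setOf_coe_mul {P : ℝ → Prop} {c : ℝ} (hc : 0 < c) :
    sSup {t : EReal | ∃ s : ℝ, t = s ∧ P (c * s)} =
      sSup {t : EReal | ∃ s : ℝ, t = s ∧ P s} / c := by
  rw [← sSup_image_div (EReal.coe_pos.mpr hc) (coe_ne_top c)]
  congr 1
  ext t
  constructor
  · rintro ⟨s, rfl, hs⟩
    exact ⟨(c * s : ℝ), ⟨_, rfl, hs⟩, by
      show ((c * s : ℝ) : EReal) / c = s
      rw [← coe_div, mul_div_cancel_left₀ s hc.ne']⟩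
  · rintro ⟨_, ⟨s, rfl, hs⟩, rfl⟩
    exact ⟨s / c, (coe_div s c).symm, by rwa [mul_div_cancel₀ s hc.ne']⟩

end EReal

section cBCM

variable {R : Type} [CommRing R] [IsDomain R] {B : Type} [CommRing B] [Algebra R B]
  [Algebra (Rplus R) B] {𝔞 𝔟 I J : Ideal R}

theorem cBCM_le_cBCM {J' : Ideal R} (h : ∀ s, subGT R B 𝔟 J' s → subGT R B 𝔞 J s) :
    cBCM R B 𝔞 J ≤ cBCM R B 𝔟 J' :=
  sSup_le_sSup fun _ ⟨s, hs, hns⟩ => ⟨s, hs, fun h' => hns (h s h')⟩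

theorem cBCM_mono_left (h : 𝔞 ≤ 𝔟) : cBCM R B 𝔞 J ≤ cBCM R B 𝔟 J :=
  cBCM_le_cBCM fun s hsub x hx => hsub x (valFracGT_mono (extIdeal_mono h) s hx)

theorem cBCM_anti_right (h : J ≤ I) : cBCM R B 𝔞 I ≤ cBCM R B 𝔞 J :=
  cBCM_le_cBCM fun _ hsub x hx => Ideal.map_mono h (hsub x hx)

theorem cBCM_span_idealIntClosure [IsNoetherianRing R] :
    cBCM R B (Ideal.span (idealIntClosure 𝔞)) J = cBCM R B 𝔞 J := by
  simp only [cBCM, subGT, valFracGT_extIdeal_span_idealIntClosure]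

theorem cBCM_pow [IsNoetherianRing R] {n : ℕ} (hn : 1 ≤ n) :
    cBCM R B (𝔞 ^ n) J = cBCM R B 𝔞 J / (n : ℝ) := by
  have hsub : ∀ s, subGT R B (𝔞 ^ n) J s ↔ subGT R B 𝔞 J (n * s) := fun _ => by
    simp only [subGT, valFracGT_extIdeal_pow 𝔞 hn]
  simp only [cBCM, hsub]
  exact EReal.sSup_setOf_coe_mul (P := fun s => ¬subGT R B 𝔞 J s) (by exact_mod_cast hn)

end cBCM

theorem stmt17_general (R : Type) [CommRing R] [IsDomain R] [IsNoetherianRing R]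
    (B : Type) [CommRing B] [Algebra R B] [Algebra (↥(Rplus R)) B]
    (𝔞 𝔟 I J : Ideal R) (n : ℕ) (hn : 1 ≤ n) :
    (𝔞 ≤ 𝔟 → cBCM R B 𝔞 J ≤ cBCM R B 𝔟 J) ∧
    (J ≤ I → cBCM R B 𝔞 I ≤ cBCM R B 𝔞 J) ∧
    (cBCM R B 𝔞 J = cBCM R B (Ideal.span (idealIntClosure 𝔞)) J) ∧
    (cBCM R B (𝔞 ^ n) J = (((n : ℝ)⁻¹ : ℝ) : EReal) * cBCM R B 𝔞 J) :=
  ⟨cBCM_mono_left, cBCM_anti_right, cBCM_span_idealIntClosure.symm, by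
    rw [cBCM_pow hn, EReal.div_eq_inv_mul, EReal.coe_inv]⟩

/-- Basic properties of BCM-thresholds: monotonicity in `𝔞` and in `J`, invariance under
integral closure of `𝔞`, and the scaling `c_B^J(𝔞^n) = (1/n) c_B^J(𝔞)`. -/
theorem stmt17 (R : Type) [CommRing R] [IsDomain R] [IsNoetherianRing R] [IsLocalRing R]
    [IsAdicComplete (IsLocalRing.maximalIdeal R) R]
    (B : Type) [CommRing B] [Algebra R B] [Algebra (↥(Rplus R)) B]
    [IsScalarTower R (↥(Rplus R)) B]
    (hBCM : IsBalancedBigCM R B)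
    (𝔞 𝔟 I J : Ideal R) (n : ℕ) (hn : 1 ≤ n) :
    (𝔞 ≤ 𝔟 → cBCM R B 𝔞 J ≤ cBCM R B 𝔟 J) ∧
    (J ≤ I → cBCM R B 𝔞 I ≤ cBCM R B 𝔞 J) ∧
    (cBCM R B 𝔞 J = cBCM R B (Ideal.span (idealIntClosure 𝔞)) J) ∧
    (cBCM R B (𝔞 ^ n) J = (((n : ℝ)⁻¹ : ℝ) : EReal) * cBCM R B 𝔞 J) :=
  stmt17_general R B 𝔞 𝔟 I J n hn
end
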